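/- arXiv:2601.14174 — 2 statements merged into one kernel-verified Lean document; each statement's English description precedes it below -/
import Mathlib

section
/- In the setting of the trace-greedy extraction (R^{(0)} = R, D_k = (R^{(k-1)})^{1/2} P_{j_k} (R^{(k-1)})^{1/2} with j_k maximizing the trace of the extracted block among N projections summing to I), the remainders R^{(m)} = R − ∑_{k=1}^m D_k converge to 0 in trace norm, with ‖R − ∑_{k=1}^m D_k‖₁ ≤ (1 − 1/N)^m tr(R); hence R = ∑_{k=1}^∞ D_k in the trace class. -/
/-!
Write `τ T = ∑ᵢ Re ⟪bᵢ, T bᵢ⟫`. Since `0 ≤ P_j ≤ 1`, each block `√A P_j √A` lies between `0`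
and `A`; hence the remainders decrease and every remainder and block is dominated by `R`,
so their diagonals are summable and `τ` is additive on them. The `N` blocks of `A = R⁽ᵐ⁾` add up to `A`, so the
greedy block `D_m` carries at least `τ A / N`, whence `τ R⁽ᵐ⁺¹⁾ ≤ (1 - 1/N) τ R⁽ᵐ⁾`.
Finally `R - ∑_{k<m} D_k = R⁽ᵐ⁾` telescopes.
-/

open Filter Topology

theorem le_geom_of_le_card_mul {t d : ℕ → ℝ} {N : ℕ} (hN : 0 < N)
    (hstep : ∀ m, t (m + 1) = t m - d m) (hd : ∀ m, t m ≤ N * d m) (m : ℕ) :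
    t m ≤ (1 - 1 / (N : ℝ)) ^ m * t 0 := by
  have hN' : (1 : ℝ) ≤ N := by exact_mod_cast hN
  refine le_geom (sub_nonneg.2 (div_le_one_of_le₀ hN' (by positivity))) m fun k _ => ?_
  rw [hstep k, sub_mul, one_mul, one_div_mul_eq_div, sub_le_sub_iff_left,
    div_le_iff₀ (by positivity), mul_comm]
  exact hd k

theorem tendsto_one_sub_one_div_pow_atTop {N : ℕ} (hN : 0 < N) :
    Tendsto (fun m => (1 - 1 / (N : ℝ)) ^ m) atTop (𝓝 0) := by
  have hN' : (1 : ℝ) ≤ N := by exact_mod_cast hN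
  exact tendsto_pow_atTop_nhds_zero_of_lt_one
    (sub_nonneg.2 (div_le_one_of_le₀ hN' (by positivity))) (sub_lt_self 1 (by positivity))

theorem sub_sum_range_eq_of_succ_eq_sub {G : Type*} [AddCommGroup G] {f g : ℕ → G}
    (h : ∀ k, f (k + 1) = f k - g k) (m : ℕ) : f 0 - ∑ k ∈ Finset.range m, g k = f m := by
  have hg (k : ℕ) : g k = f k - f (k + 1) := by rw [h k, sub_sub_cancel]
  rw [Finset.sum_congr rfl fun k _ => hg k, Finset.sum_range_sub', sub_sub_cancel]

section DiagonalSum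

variable {𝕜 E ι : Type*} [RCLike 𝕜] [NormedAddCommGroup E] [InnerProductSpace 𝕜 E]
  {v : ι → E} {S T : E →L[𝕜] E}

theorem ContinuousLinearMap.re_inner_apply_le_of_le (h : S ≤ T) (x : E) :
    RCLike.re (inner 𝕜 x (S x)) ≤ RCLike.re (inner 𝕜 x (T x)) := by
  have := ((le_def S T).1 h).re_inner_nonneg_right x
  rw [sub_apply, inner_sub_right, map_sub] at this
  linarith

theorem ContinuousLinearMap.summable_re_inner_of_le (hS : 0 ≤ S) (hST : S ≤ T)
    (hT : Summable fun i => RCLike.re (inner 𝕜 (v i) (T (v i)))) :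
    Summable fun i => RCLike.re (inner 𝕜 (v i) (S (v i))) :=
  hT.of_nonneg_of_le (fun i => ((nonneg_iff_isPositive S).1 hS).re_inner_nonneg_right (v i))
    fun i => re_inner_apply_le_of_le hST (v i)

theorem ContinuousLinearMap.tsum_re_inner_sub
    (hS : Summable fun i => RCLike.re (inner 𝕜 (v i) (S (v i))))
    (hT : Summable fun i => RCLike.re (inner 𝕜 (v i) (T (v i)))) :
    ∑' i, RCLike.re (inner 𝕜 (v i) ((S - T) (v i))) =
      ∑' i, RCLike.re (inner 𝕜 (v i) (S (v i))) - ∑' i, RCLike.re (inner 𝕜 (v i) (T (v i))) := by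
  simp only [sub_apply, inner_sub_right, map_sub]
  exact hS.tsum_sub hT

theorem ContinuousLinearMap.tsum_re_inner_sum {κ : Type*} {s : Finset κ} {f : κ → E →L[𝕜] E}
    (hf : ∀ j ∈ s, Summable fun i => RCLike.re (inner 𝕜 (v i) (f j (v i)))) :
    ∑' i, RCLike.re (inner 𝕜 (v i) ((∑ j ∈ s, f j) (v i))) =
      ∑ j ∈ s, ∑' i, RCLike.re (inner 𝕜 (v i) (f j (v i))) := by
  simp only [sum_apply, inner_sum, map_sum]
  exact Summable.tsum_finsetSum hf

end DiagonalSum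

section Blocks

variable {A : Type*} [CStarAlgebra A] [PartialOrder A] [StarOrderedRing A] {a p : A}

theorem CFC.sqrt_mul_mul_sqrt_nonneg (a : A) (hp : 0 ≤ p) : 0 ≤ sqrt a * p * sqrt a :=
  conjugate_nonneg_of_nonneg hp (sqrt_nonneg a)

theorem CFC.sqrt_mul_mul_sqrt_le (ha : 0 ≤ a) (hp : p ≤ 1) : sqrt a * p * sqrt a ≤ a := by
  simpa [sqrt_mul_sqrt_self a ha] using conjugate_le_conjugate_of_nonneg hp (sqrt_nonneg a)

theorem CFC.sum_sqrt_mul_mul_sqrt {κ : Type*} {s : Finset κ} {p : κ → A} (ha : 0 ≤ a)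
    (hp : ∑ j ∈ s, p j = 1) : ∑ j ∈ s, sqrt a * p j * sqrt a = a := by
  rw [← Finset.sum_mul, ← Finset.mul_sum, hp, mul_one, sqrt_mul_sqrt_self a ha]

end Blocks

open ContinuousLinearMap in
theorem tsum_re_inner_le_card_mul_of_greedy {E ι : Type*} [NormedAddCommGroup E]
    [InnerProductSpace ℂ E] [CompleteSpace E] {v : ι → E} {N : ℕ}
    {P : Fin N → E →L[ℂ] E} (hP : ∀ j, 0 ≤ P j) (hsum : ∑ j, P j = 1)
    {a : E →L[ℂ] E} (ha : 0 ≤ a) (htc : Summable fun i => (inner ℂ (v i) (a (v i))).re)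
    {j₀ : Fin N} (hj₀ : ∀ j,
      ∑' i, (inner ℂ (v i) ((CFC.sqrt a * P j * CFC.sqrt a) (v i))).re ≤
        ∑' i, (inner ℂ (v i) ((CFC.sqrt a * P j₀ * CFC.sqrt a) (v i))).re) :
    ∑' i, (inner ℂ (v i) (a (v i))).re ≤
      N * ∑' i, (inner ℂ (v i) ((CFC.sqrt a * P j₀ * CFC.sqrt a) (v i))).re := by
  have hP_le_one (j : Fin N) : P j ≤ 1 :=
    hsum ▸ Finset.single_le_sum (fun j _ => hP j) (Finset.mem_univ j)
  have hblock_summable (j : Fin N) :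
      Summable fun i => (inner ℂ (v i) ((CFC.sqrt a * P j * CFC.sqrt a) (v i))).re :=
    summable_re_inner_of_le (𝕜 := ℂ) (CFC.sqrt_mul_mul_sqrt_nonneg a (hP j))
      (CFC.sqrt_mul_mul_sqrt_le ha (hP_le_one j)) htc
  calc ∑' i, (inner ℂ (v i) (a (v i))).re
      = ∑' i, (inner ℂ (v i) ((∑ j, CFC.sqrt a * P j * CFC.sqrt a) (v i))).re := by
        rw [CFC.sum_sqrt_mul_mul_sqrt ha hsum]
    _ = ∑ j, ∑' i, (inner ℂ (v i) ((CFC.sqrt a * P j * CFC.sqrt a) (v i))).re :=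
        tsum_re_inner_sum (𝕜 := ℂ) fun j _ => hblock_summable j
    _ ≤ ∑ _j : Fin N, ∑' i, (inner ℂ (v i) ((CFC.sqrt a * P j₀ * CFC.sqrt a) (v i))).re :=
        Finset.sum_le_sum fun j _ => hj₀ j
    _ = _ := by simp

variable {H : Type*} [NormedAddCommGroup H] [InnerProductSpace ℂ H] [CompleteSpace H]

theorem trace_greedy_series_general {ι : Type*} (b : HilbertBasis ι ℂ H)
    {N : ℕ} (hN : 0 < N)
    (P : Fin N → H →L[ℂ] H)
    (hsa : ∀ j, IsSelfAdjoint (P j)) (hidem : ∀ j, IsIdempotentElem (P j))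
    (hsum : ∑ j, P j = 1)
    (R : H →L[ℂ] H)
    (htc : Summable fun i => (inner ℂ (b i) (R (b i)) : ℂ).re)
    (Rseq : ℕ → H →L[ℂ] H) (jsel : ℕ → Fin N) (D : ℕ → H →L[ℂ] H)
    (h0 : Rseq 0 = R)
    (hpos : ∀ k, 0 ≤ Rseq k)
    (hD : ∀ k, D k = CFC.sqrt (Rseq k) * P (jsel k) * CFC.sqrt (Rseq k))
    (hrec : ∀ k, Rseq (k + 1) = Rseq k - D k)
    (hgreedy : ∀ k, ∀ j : Fin N,
      ∑' i, (inner ℂ (b i) ((CFC.sqrt (Rseq k) * P j * CFC.sqrt (Rseq k)) (b i)) : ℂ).re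
        ≤ ∑' i, (inner ℂ (b i) (D k (b i)) : ℂ).re) :
    (∀ m, ∑' i, (inner ℂ (b i) (((R - ∑ k ∈ Finset.range m, D k)) (b i)) : ℂ).re
        ≤ (1 - 1 / (N : ℝ)) ^ m * ∑' i, (inner ℂ (b i) (R (b i)) : ℂ).re) ∧
    Filter.Tendsto
      (fun m => ∑' i, (inner ℂ (b i) (((R - ∑ k ∈ Finset.range m, D k)) (b i)) : ℂ).re)
      Filter.atTop (nhds 0) := by
  set τ : (H →L[ℂ] H) → ℝ := fun T => ∑' i, (inner ℂ (b i) (T (b i))).re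
  have hP (j : Fin N) : 0 ≤ P j := IsStarProjection.nonneg ⟨hidem j, hsa j⟩
  have hD_nonneg (k : ℕ) : 0 ≤ D k := hD k ▸ CFC.sqrt_mul_mul_sqrt_nonneg _ (hP _)
  have hD_le (k : ℕ) : D k ≤ Rseq k := sub_nonneg.1 (hrec k ▸ hpos (k + 1))
  have hRseq_le (m : ℕ) : Rseq m ≤ R :=
    h0 ▸ antitone_nat_of_succ_le (fun k => hrec k ▸ sub_le_self _ (hD_nonneg k)) m.zero_le
  have hsummable {T : H →L[ℂ] H} (hT : 0 ≤ T) (hTR : T ≤ R) :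
      Summable fun i => (inner ℂ (b i) (T (b i))).re :=
    ContinuousLinearMap.summable_re_inner_of_le (𝕜 := ℂ) hT hTR htc
  have hstep (m : ℕ) : τ (Rseq (m + 1)) = τ (Rseq m) - τ (D m) := by
    rw [hrec m]
    exact ContinuousLinearMap.tsum_re_inner_sub (𝕜 := ℂ) (hsummable (hpos m) (hRseq_le m))
      (hsummable (hD_nonneg m) ((hD_le m).trans (hRseq_le m)))
  have hgreedy_block (m : ℕ) : τ (Rseq m) ≤ N * τ (D m) :=
    hD m ▸ tsum_re_inner_le_card_mul_of_greedy hP hsum (hpos m)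
      (hsummable (hpos m) (hRseq_le m)) (hD m ▸ hgreedy m)
  have hbound := le_geom_of_le_card_mul hN hstep hgreedy_block
  simp only [← h0, sub_sum_range_eq_of_succ_eq_sub hrec]
  refine ⟨hbound, squeeze_zero (fun m => ?_) hbound ?_⟩
  · exact tsum_nonneg fun i =>
      ((ContinuousLinearMap.nonneg_iff_isPositive _).1 (hpos m)).re_inner_nonneg_right (b i)
  · simpa using (tendsto_one_sub_one_div_pow_atTop hN).mul_const (τ (Rseq 0))

/-- the trace-greedy partial sums converge to R in trace norm,
with geometric remainder bound; for positive remainders the trace norm is the trace. -/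
theorem trace_greedy_series {ι : Type*} (b : HilbertBasis ι ℂ H)
    {N : ℕ} (hN : 0 < N)
    (P : Fin N → H →L[ℂ] H)
    (hsa : ∀ j, IsSelfAdjoint (P j)) (hidem : ∀ j, IsIdempotentElem (P j))
    (horth : ∀ j j', j ≠ j' → P j * P j' = 0)
    (hsum : ∑ j, P j = 1)
    (R : H →L[ℂ] H) (hR : 0 ≤ R)
    (htc : Summable fun i => (inner ℂ (b i) (R (b i)) : ℂ).re)
    (Rseq : ℕ → H →L[ℂ] H) (jsel : ℕ → Fin N) (D : ℕ → H →L[ℂ] H)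
    (h0 : Rseq 0 = R)
    (hpos : ∀ k, 0 ≤ Rseq k)
    (hD : ∀ k, D k = CFC.sqrt (Rseq k) * P (jsel k) * CFC.sqrt (Rseq k))
    (hrec : ∀ k, Rseq (k + 1) = Rseq k - D k)
    (hgreedy : ∀ k, ∀ j : Fin N,
      ∑' i, (inner ℂ (b i) ((CFC.sqrt (Rseq k) * P j * CFC.sqrt (Rseq k)) (b i)) : ℂ).re
        ≤ ∑' i, (inner ℂ (b i) (D k (b i)) : ℂ).re) :
    (∀ m, ∑' i, (inner ℂ (b i) (((R - ∑ k ∈ Finset.range m, D k)) (b i)) : ℂ).re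
        ≤ (1 - 1 / (N : ℝ)) ^ m * ∑' i, (inner ℂ (b i) (R (b i)) : ℂ).re) ∧
    Filter.Tendsto
      (fun m => ∑' i, (inner ℂ (b i) (((R - ∑ k ∈ Finset.range m, D k)) (b i)) : ℂ).re)
      Filter.atTop (nhds 0) :=
  trace_greedy_series_general b hN P hsa hidem hsum R htc Rseq jsel D h0 hpos hD hrec hgreedy
end

section
/- Let A be a positive Hilbert-Schmidt operator on a Hilbert space H and P_1,…,P_N orthogonal projections with pairwise orthogonal ranges summing to I. Then (1/N)‖A‖₂² ≤ ∑_{j=1}^N ‖A^{1/2} P_j A^{1/2}‖₂² ≤ ‖A‖₂². -/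
/-!
With `Tⱼ = Pⱼ A^{1/2}` the blocks are `A^{1/2} Pⱼ A^{1/2} = Tⱼ* Tⱼ`, and `‖T* T‖₂ = ‖T T*‖₂`
(with `r = (T T*)^{1/2}`, both equal `‖r T‖₂ = ‖(r T)*‖₂`), so `‖A^{1/2} Pⱼ A^{1/2}‖₂ = ‖Pⱼ A Pⱼ‖₂`.
The diagonal blocks `Pⱼ A Pⱼ` carry at most the Hilbert–Schmidt mass `‖A‖₂² = ∑ⱼ ‖A Pⱼ‖₂²`,
which gives the upper bound. The lower bound is Cauchy–Schwarz applied to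
`A = ∑ⱼ A^{1/2} Pⱼ A^{1/2}`.
-/

open scoped ENNReal InnerProductSpace
open ContinuousLinearMap

section

variable {𝕜 E ι : Type*} [RCLike 𝕜] [NormedAddCommGroup E] [InnerProductSpace 𝕜 E]

theorem IsStarProjection.norm_apply_sq [CompleteSpace E] {P : E →L[𝕜] E}
    (hP : IsStarProjection P) (x : E) : ‖P x‖ ^ 2 = RCLike.re ⟪x, P x⟫_𝕜 := by
  rw [apply_norm_sq_eq_inner_adjoint_right, ← star_eq_adjoint, hP.isSelfAdjoint.star_eq]
  exact congrArg (fun Q : E →L[𝕜] E => RCLike.re ⟪x, Q x⟫_𝕜) hP.isIdempotentElem.eq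

theorem sum_enorm_apply_sq_eq_enorm_sq [CompleteSpace E] {κ : Type*} [Fintype κ]
    {P : κ → E →L[𝕜] E} (hP : ∀ j, IsStarProjection (P j)) (hsum : ∑ j, P j = 1) (x : E) :
    ∑ j, ‖P j x‖ₑ ^ 2 = ‖x‖ₑ ^ 2 := by
  have h : ∑ j, ‖P j x‖ ^ 2 = ‖x‖ ^ 2 := by
    simp only [(hP _).norm_apply_sq, ← map_sum, ← inner_sum, ← sum_apply, hsum,
      one_apply_eq_self, inner_self_eq_norm_sq]
  simp only [← ofReal_norm, ← ENNReal.ofReal_pow (norm_nonneg _)]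
  rw [← ENNReal.ofReal_sum_of_nonneg fun _ _ => by positivity, h]

namespace HilbertBasis

variable (b : HilbertBasis ι 𝕜 E)

theorem tsum_enorm_inner_sq (x : E) : ∑' k, ‖⟪b k, x⟫_𝕜‖ₑ ^ 2 = ‖x‖ₑ ^ 2 := by
  have hx := lp.hasSum_norm (p := 2) (by norm_num) (b.repr x)
  simp only [b.repr_apply_apply, LinearIsometryEquiv.norm_map, ENNReal.toReal_ofNat,
    Real.rpow_two] at hx
  simp only [← ofReal_norm, ← ENNReal.ofReal_pow (norm_nonneg _)]
  rw [← ENNReal.ofReal_tsum_of_nonneg (fun _ => by positivity) hx.summable, hx.tsum_eq]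

/-- Valued in `ℝ≥0∞`, so that double series can be rearranged without summability hypotheses. -/
noncomputable def hsNormSq (T : E →L[𝕜] E) : ℝ≥0∞ := ∑' i, ‖T (b i)‖ₑ ^ 2

theorem hsNormSq_eq_tsum_tsum (T : E →L[𝕜] E) :
    b.hsNormSq T = ∑' i, ∑' k, ‖⟪b k, T (b i)⟫_𝕜‖ₑ ^ 2 :=
  tsum_congr fun _ => (b.tsum_enorm_inner_sq _).symm

theorem tsum_norm_sq_eq_toReal (T : E →L[𝕜] E) :
    ∑' i, ‖T (b i)‖ ^ 2 = (b.hsNormSq T).toReal := by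
  rw [hsNormSq, ENNReal.tsum_toReal_eq fun _ => by finiteness]
  simp only [ENNReal.toReal_pow, toReal_enorm]

theorem hsNormSq_ne_top_of_summable (T : E →L[𝕜] E)
    (hT : Summable fun i => ‖T (b i)‖ ^ 2) : b.hsNormSq T ≠ ∞ := by
  simp only [hsNormSq, ← ofReal_norm, ← ENNReal.ofReal_pow (norm_nonneg _)]
  rw [← ENNReal.ofReal_tsum_of_nonneg (fun _ => by positivity) hT]
  exact ENNReal.ofReal_ne_top

theorem hsNormSq_sum_le_card_mul {κ : Type*} (s : Finset κ) (T : κ → E →L[𝕜] E) :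
    b.hsNormSq (∑ j ∈ s, T j) ≤ s.card * ∑ j ∈ s, b.hsNormSq (T j) := by
  have hpoint (x : E) : ‖∑ j ∈ s, T j x‖ₑ ^ 2 ≤ s.card * ∑ j ∈ s, ‖T j x‖ₑ ^ 2 := by
    have h : ‖∑ j ∈ s, T j x‖₊ ^ 2 ≤ s.card * ∑ j ∈ s, ‖T j x‖₊ ^ 2 :=
      (pow_le_pow_left₀ zero_le (nnnorm_sum_le s _) 2).trans sq_sum_le_card_mul_sum_sq
    simp only [enorm_eq_nnnorm]
    exact_mod_cast h
  calc b.hsNormSq (∑ j ∈ s, T j)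
      ≤ ∑' i, s.card * ∑ j ∈ s, ‖T j (b i)‖ₑ ^ 2 :=
        ENNReal.tsum_le_tsum fun i => by simpa only [sum_apply] using hpoint (b i)
    _ = s.card * ∑ j ∈ s, b.hsNormSq (T j) := by
        rw [ENNReal.tsum_mul_left, Summable.tsum_finsetSum fun _ _ => ENNReal.summable]; rfl

variable [CompleteSpace E]

theorem hsNormSq_star (T : E →L[𝕜] E) : b.hsNormSq (star T) = b.hsNormSq T := by
  simp only [hsNormSq_eq_tsum_tsum, star_eq_adjoint, adjoint_inner_right]
  rw [ENNReal.tsum_comm]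
  simp only [← ofReal_norm, norm_inner_symm]

theorem hsNormSq_eq_of_star_mul_self_eq {T U : E →L[𝕜] E} (h : star T * T = star U * U) :
    b.hsNormSq T = b.hsNormSq U := by
  have hnorm (x : E) : ‖T x‖ = ‖U x‖ := by
    have := congrArg (fun V : E →L[𝕜] E => RCLike.re ⟪V x, x⟫_𝕜) h
    simp only [star_eq_adjoint] at this
    rw [← sq_eq_sq₀ (norm_nonneg _) (norm_nonneg _), apply_norm_sq_eq_inner_adjoint_left,
      apply_norm_sq_eq_inner_adjoint_left]
    exact this
  simp only [hsNormSq, ← ofReal_norm, hnorm]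

theorem hsNormSq_eq_sum_mul {κ : Type*} [Fintype κ] {P : κ → E →L[𝕜] E}
    (hP : ∀ j, IsStarProjection (P j)) (hsum : ∑ j, P j = 1) (T : E →L[𝕜] E) :
    b.hsNormSq T = ∑ j, b.hsNormSq (P j * T) := by
  simp only [hsNormSq]
  rw [← Summable.tsum_finsetSum fun _ _ => ENNReal.summable]
  exact tsum_congr fun _ => (sum_enorm_apply_sq_eq_enorm_sq hP hsum _).symm

theorem sum_hsNormSq_mul_mul_le {κ : Type*} [Fintype κ] {P : κ → E →L[𝕜] E}
    (hP : ∀ j, IsStarProjection (P j)) (hsum : ∑ j, P j = 1) (T : E →L[𝕜] E) :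
    ∑ j, b.hsNormSq (P j * T * P j) ≤ b.hsNormSq T :=
  calc ∑ j, b.hsNormSq (P j * T * P j)
      ≤ ∑ j, b.hsNormSq (T * P j) := Finset.sum_le_sum fun j _ => by
        rw [b.hsNormSq_eq_sum_mul hP hsum (T * P j), mul_assoc]
        exact Finset.single_le_sum (f := fun k => b.hsNormSq (P k * (T * P j)))
          (fun _ _ => zero_le) (Finset.mem_univ j)
    _ = ∑ j, b.hsNormSq (P j * star T) := Finset.sum_congr rfl fun j _ => by
        rw [← b.hsNormSq_star, star_mul, (hP j).isSelfAdjoint.star_eq]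
    _ = b.hsNormSq T := by rw [← b.hsNormSq_eq_sum_mul hP hsum, hsNormSq_star]

end HilbertBasis

end

variable {H : Type*} [NormedAddCommGroup H] [InnerProductSpace ℂ H] [CompleteSpace H]

namespace HilbertBasis

variable {ι : Type*} (b : HilbertBasis ι ℂ H)

theorem hsNormSq_star_mul_self (T : H →L[ℂ] H) :
    b.hsNormSq (star T * T) = b.hsNormSq (T * star T) := by
  set r := CFC.sqrt (T * star T)
  have hrr : r * r = T * star T := CFC.sqrt_mul_sqrt_self _ (mul_star_self_nonneg T)
  have hr : star r = r := (CFC.sqrt_nonneg _).isSelfAdjoint.star_eq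
  calc b.hsNormSq (star T * T) = b.hsNormSq (r * T) := by
        refine b.hsNormSq_eq_of_star_mul_self_eq ?_
        rw [star_mul, star_mul, star_star, hr]
        simp only [mul_assoc]
        rw [← mul_assoc r, hrr]
        simp only [mul_assoc]
    _ = b.hsNormSq (star (r * T)) := (b.hsNormSq_star _).symm
    _ = b.hsNormSq (T * star T) := by
        refine b.hsNormSq_eq_of_star_mul_self_eq ?_
        rw [star_star, star_mul, hr, star_mul, star_star, ← hrr]
        simp only [mul_assoc]
        rw [← mul_assoc T, ← hrr]
        simp only [mul_assoc]

theorem hsNormSq_sqrt_mul_mul_sqrt {A P : H →L[ℂ] H} (hA : 0 ≤ A) (hP : IsStarProjection P) :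
    b.hsNormSq (CFC.sqrt A * P * CFC.sqrt A) = b.hsNormSq (P * A * P) := by
  have hs : star (CFC.sqrt A) = CFC.sqrt A := (CFC.sqrt_nonneg A).isSelfAdjoint.star_eq
  have h1 : star (P * CFC.sqrt A) * (P * CFC.sqrt A) = CFC.sqrt A * P * CFC.sqrt A := by
    rw [star_mul, hs, hP.isSelfAdjoint.star_eq, mul_assoc, ← mul_assoc P,
      hP.isIdempotentElem.eq, mul_assoc]
  have h2 : P * CFC.sqrt A * star (P * CFC.sqrt A) = P * A * P := by
    rw [star_mul, hs, hP.isSelfAdjoint.star_eq, mul_assoc, ← mul_assoc (CFC.sqrt A),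
      CFC.sqrt_mul_sqrt_self A hA, mul_assoc]
  rw [← h1, ← h2, hsNormSq_star_mul_self]

end HilbertBasis

theorem hs_block_bounds_general {ι : Type*} (b : HilbertBasis ι ℂ H)
    {N : ℕ}
    (P : Fin N → H →L[ℂ] H)
    (hsa : ∀ j, IsSelfAdjoint (P j)) (hidem : ∀ j, IsIdempotentElem (P j))
    (hsum : ∑ j, P j = 1)
    (A : H →L[ℂ] H) (hA : 0 ≤ A)
    (hHS : Summable fun i => ‖A (b i)‖ ^ 2) :
    (1 / (N : ℝ)) * ∑' i, ‖A (b i)‖ ^ 2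
        ≤ ∑ j, ∑' i, ‖(CFC.sqrt A * P j * CFC.sqrt A) (b i)‖ ^ 2 ∧
    ∑ j, ∑' i, ‖(CFC.sqrt A * P j * CFC.sqrt A) (b i)‖ ^ 2
        ≤ ∑' i, ‖A (b i)‖ ^ 2 := by
  have hP j : IsStarProjection (P j) := ⟨hidem j, hsa j⟩
  have hupper : ∑ j, b.hsNormSq (CFC.sqrt A * P j * CFC.sqrt A) ≤ b.hsNormSq A := by
    simpa only [b.hsNormSq_sqrt_mul_mul_sqrt hA (hP _)] using b.sum_hsNormSq_mul_mul_le hP hsum A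
  have hlower : b.hsNormSq A ≤ N * ∑ j, b.hsNormSq (CFC.sqrt A * P j * CFC.sqrt A) := by
    have hB : ∑ j, CFC.sqrt A * P j * CFC.sqrt A = A := by
      rw [← Finset.sum_mul, ← Finset.mul_sum, hsum, mul_one, CFC.sqrt_mul_sqrt_self A hA]
    simpa only [hB, Finset.card_univ, Fintype.card_fin] using
      b.hsNormSq_sum_le_card_mul Finset.univ fun j => CFC.sqrt A * P j * CFC.sqrt A
  have hA_fin : b.hsNormSq A ≠ ∞ := b.hsNormSq_ne_top_of_summable A hHS
  have hB_fin := ne_top_of_le_ne_top hA_fin hupper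
  simp only [b.tsum_norm_sq_eq_toReal]
  rw [← ENNReal.toReal_sum (ENNReal.sum_ne_top.mp hB_fin)]
  refine ⟨?_, ENNReal.toReal_mono hA_fin hupper⟩
  rw [one_div_mul_eq_div]
  refine div_le_of_le_mul₀ (Nat.cast_nonneg N) ENNReal.toReal_nonneg ?_
  rw [mul_comm]
  simpa only [ENNReal.toReal_mul, ENNReal.toReal_natCast] using
    ENNReal.toReal_mono (ENNReal.mul_ne_top (ENNReal.natCast_ne_top N) hB_fin) hlower

/-- two-sided bound for the sum of squared HS norms of the content blocks. -/
theorem hs_block_bounds {ι : Type*} (b : HilbertBasis ι ℂ H)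
    {N : ℕ} (hN : 0 < N)
    (P : Fin N → H →L[ℂ] H)
    (hsa : ∀ j, IsSelfAdjoint (P j)) (hidem : ∀ j, IsIdempotentElem (P j))
    (horth : ∀ j j', j ≠ j' → P j * P j' = 0)
    (hsum : ∑ j, P j = 1)
    (A : H →L[ℂ] H) (hA : 0 ≤ A)
    (hHS : Summable fun i => ‖A (b i)‖ ^ 2) :
    (1 / (N : ℝ)) * ∑' i, ‖A (b i)‖ ^ 2
        ≤ ∑ j, ∑' i, ‖(CFC.sqrt A * P j * CFC.sqrt A) (b i)‖ ^ 2 ∧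
    ∑ j, ∑' i, ‖(CFC.sqrt A * P j * CFC.sqrt A) (b i)‖ ^ 2
        ≤ ∑' i, ‖A (b i)‖ ^ 2 :=
  hs_block_bounds_general b P hsa hidem hsum A hA hHS
end
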